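/- Let X = {0, 1, 2} (a three-point discrete metric space), f1 the cyclic permutation 0 ↦ 1 ↦ 2 ↦ 0, and f2 the inverse cyclic permutation 0 ↦ 2 ↦ 1 ↦ 0. Then both f1 and f2 are topologically transitive, but the multiple mapping F = {f1, f2} is NOT transitive: taking U = {0} and 𝒰 = {{0,2}} (a nonempty open subset of Ran(F) = {{1,2}, {0,2}, {0,1}, {0,1,2}}), there is no n ≥ 1 with F^n(0) ∈ 𝒰. -/

import Mathlib

open TopologicalSpace

/-- `mIter f₁ f₂ n x` is the set `F^n(x)` for the multiple mapping `F = {f₁, f₂}`: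
all points `f_{i₁} ∘ ⋯ ∘ f_{iₙ} (x)` with `i₁, …, iₙ ∈ {1, 2}`. -/
def mIter {X : Type*} (f₁ f₂ : X → X) : ℕ → X → Set X
  | 0, x => {x}
  | n + 1, x => f₁ '' mIter f₁ f₂ n x ∪ f₂ '' mIter f₁ f₂ n x

lemma mIter_finite {X : Type*} (f₁ f₂ : X → X) (n : ℕ) (x : X) :
    (mIter f₁ f₂ n x).Finite := by
  induction n with
  | zero => exact Set.finite_singleton x
  | succ n ih => exact (ih.image f₁).union (ih.image f₂)

lemma mIter_nonempty {X : Type*} (f₁ f₂ : X → X) (n : ℕ) (x : X) :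
    (mIter f₁ f₂ n x).Nonempty := by
  induction n with
  | zero => exact ⟨x, rfl⟩
  | succ n ih => exact (ih.image f₁).mono Set.subset_union_left

/-- `F^n(x)` as a nonempty compact subset of `X`. -/
def mIterNC {X : Type*} [TopologicalSpace X] (f₁ f₂ : X → X) (n : ℕ) (x : X) :
    NonemptyCompacts X :=
  ⟨⟨mIter f₁ f₂ n x, (mIter_finite f₁ f₂ n x).isCompact⟩, mIter_nonempty f₁ f₂ n x⟩

/-- The deleted orbit of `x` under `F = {f₁, f₂}`: the family `{F^n(x) : n ≥ 1}`. -/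
def deletedOrbit {X : Type*} (f₁ f₂ : X → X) (x : X) : Set (Set X) :=
  {S | ∃ n, 1 ≤ n ∧ S = mIter f₁ f₂ n x}

/-- `x` is a periodic point of `F = {f₁, f₂}`: its deleted orbit is finite and
`x ∈ F^m(x)` for some `m ≥ 1`. -/
def MPeriodicPt {X : Type*} (f₁ f₂ : X → X) (x : X) : Prop :=
  (deletedOrbit f₁ f₂ x).Finite ∧ ∃ m, 1 ≤ m ∧ x ∈ mIter f₁ f₂ m x

/-- `Ran(F) = {F^n(x) : n ≥ 1, x ∈ X}` as a set of nonempty compact subsets of `X`. -/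
def mRan {X : Type*} [TopologicalSpace X] (f₁ f₂ : X → X) : Set (NonemptyCompacts X) :=
  {K | ∃ n, 1 ≤ n ∧ ∃ x, K = mIterNC f₁ f₂ n x}

/-- Transitivity of the multiple mapping `F = {f₁, f₂}`: for every nonempty open
`U ⊆ X` and every nonempty relatively open subset `𝒰` of `Ran(F)` (in the Hausdorff
metric on nonempty compact subsets), there are `n ≥ 1` and `u ∈ U` with `F^n(u) ∈ 𝒰`. -/
def MTransitive {X : Type*} [MetricSpace X] (f₁ f₂ : X → X) : Prop :=
  ∀ U : Set X, IsOpen U → U.Nonempty →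
    ∀ 𝒰 : Set (NonemptyCompacts X), 𝒰.Nonempty →
      (∃ V : Set (NonemptyCompacts X), IsOpen V ∧ 𝒰 = V ∩ mRan f₁ f₂) →
      ∃ n, 1 ≤ n ∧ ∃ u ∈ U, mIterNC f₁ f₂ n u ∈ 𝒰

/-- Hausdorff metric sensitivity of the multiple mapping `F = {f₁, f₂}`;
`dist` on `NonemptyCompacts X` is the Hausdorff metric `d_H`. -/
def MSensitive {X : Type*} [MetricSpace X] (f₁ f₂ : X → X) : Prop :=
  ∃ δ > (0 : ℝ), ∀ U : Set X, IsOpen U → U.Nonempty →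
    ∃ x ∈ U, ∃ y ∈ U, ∃ n, 1 ≤ n ∧ δ < dist (mIterNC f₁ f₂ n x) (mIterNC f₁ f₂ n y)

/-- Topological transitivity of a single map. -/
def MapTransitive {X : Type*} [TopologicalSpace X] (f : X → X) : Prop :=
  ∀ U V : Set X, IsOpen U → U.Nonempty → IsOpen V → V.Nonempty →
    ∃ n, 1 ≤ n ∧ (f^[n] '' U ∩ V).Nonempty

/-- Sensitivity of a single map. -/
def MapSensitive {X : Type*} [MetricSpace X] (f : X → X) : Prop :=
  ∃ δ > (0 : ℝ), ∀ U : Set X, IsOpen U → U.Nonempty →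
    ∃ x ∈ U, ∃ y ∈ U, ∃ n, 1 ≤ n ∧ δ < dist (f^[n] x) (f^[n] y)

/-- The three-point space `{0, 1, 2} ⊆ ℝ` (a discrete compact metric space). -/
abbrev ThreePt : Type := ({0, 1, 2} : Set ℝ)

noncomputable def q0 : ThreePt := ⟨0, by norm_num⟩
noncomputable def q1 : ThreePt := ⟨1, by norm_num⟩
noncomputable def q2 : ThreePt := ⟨2, by norm_num⟩

/-! Both maps are 3-cycles, hence transitive. The metric on `{0, 1, 2}` is uniformly discrete,
and so is the Hausdorff metric on its nonempty compact subsets; thus `{0}` is open and `{{0, 2}}`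
is relatively open in `Ran(F)`, as `{0, 2} = F(1)`. But `{1, 2} = F(0)` lies in its own image under
`F`, so `1 ∈ F^n(0)` for every `n ≥ 1` and `F^n(0) ≠ {0, 2}`. -/

open Metric

theorem mIter_one {X : Type*} (f₁ f₂ : X → X) (x : X) :
    mIter f₁ f₂ 1 x = {f₁ x, f₂ x} := by
  simp only [mIter, Set.image_singleton, Set.singleton_union]

theorem subset_mIter_of_le {X : Type*} {f₁ f₂ : X → X} {x : X} {S : Set X} {m : ℕ}
    (hS : S ⊆ f₁ '' S ∪ f₂ '' S) (hm : S ⊆ mIter f₁ f₂ m x) :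
    ∀ n, m ≤ n → S ⊆ mIter f₁ f₂ n x := by
  intro n hn
  induction n, hn using Nat.le_induction with
  | base => exact hm
  | succ n _ ih =>
    exact hS.trans (Set.union_subset_union (Set.image_mono ih) (Set.image_mono ih))

theorem mapTransitive_of_isPeriodicPt {X : Type*} [TopologicalSpace X] {f : X → X} {a : X}
    {p : ℕ} (ha : Function.IsPeriodicPt f p a)
    (horbit : ∀ x, ∃ k < p, f^[k] a = x) : MapTransitive f := by
  rintro U V - ⟨u, hu⟩ - ⟨v, hv⟩
  obtain ⟨i, hi, rfl⟩ := horbit u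
  obtain ⟨j, -, rfl⟩ := horbit v
  have hv' : f^[j + p - i] (f^[i] a) = f^[j] a := by
    rw [← Function.iterate_add_apply, Nat.sub_add_cancel (by omega), Function.iterate_add_apply,
      ha.eq]
  exact ⟨j + p - i, by omega, f^[j] a, ⟨f^[i] a, hu, hv'⟩, hv⟩

theorem mapTransitive_of_threeCycle {X : Type*} [TopologicalSpace X] {f : X → X} {a b c : X}
    (hab : f a = b) (hbc : f b = c) (hca : f c = a) (hcover : ∀ x, x = a ∨ x = b ∨ x = c) :
    MapTransitive f := by
  refine mapTransitive_of_isPeriodicPt (p := 3) (a := a) ?_ ?_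
  · show f (f (f a)) = a
    rw [hab, hbc, hca]
  · intro x
    rcases hcover x with rfl | rfl | rfl
    exacts [⟨0, by norm_num, rfl⟩, ⟨1, by norm_num, hab⟩, ⟨2, by norm_num, by simp [hab, hbc]⟩]

section UniformlyDiscrete

variable {X : Type*} [MetricSpace X] {ε : ℝ}

theorem NonemptyCompacts.eq_of_dist_lt (hX : ∀ x y : X, dist x y < ε → x = y)
    {K L : NonemptyCompacts X} (h : dist K L < ε) : K = L := by
  rw [NonemptyCompacts.dist_eq] at h
  have hfin : hausdorffEDist (K : Set X) L ≠ ⊤ := edist_ne_top K L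
  refine NonemptyCompacts.ext (Set.Subset.antisymm (fun x hx => ?_) (fun y hy => ?_))
  · obtain ⟨y, hy, hxy⟩ := exists_dist_lt_of_hausdorffDist_lt hx h hfin
    rwa [hX x y hxy]
  · obtain ⟨x, hx, hxy⟩ := exists_dist_lt_of_hausdorffDist_lt' hy h hfin
    rwa [← hX x y hxy]

theorem not_mTransitive_of_forall_ne (hε : 0 < ε) (hX : ∀ x y : X, dist x y < ε → x = y)
    {f₁ f₂ : X → X} (x : X) {K : NonemptyCompacts X} (hK : K ∈ mRan f₁ f₂)
    (hne : ∀ n, 1 ≤ n → mIterNC f₁ f₂ n x ≠ K) : ¬ MTransitive f₁ f₂ := by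
  intro hT
  have hx : IsOpen ({x} : Set X) := isOpen_singleton_iff.2 ⟨ε, hε, fun y hy => hX y x hy⟩
  have hKopen : ({K} : Set (NonemptyCompacts X)) = ball K ε ∩ mRan f₁ f₂ := by
    refine Set.Subset.antisymm ?_ fun L hL => NonemptyCompacts.eq_of_dist_lt hX hL.1
    rintro L rfl
    exact ⟨mem_ball_self hε, hK⟩
  obtain ⟨n, hn, u, rfl, hu⟩ :=
    hT {x} hx ⟨x, rfl⟩ {K} ⟨K, rfl⟩ ⟨ball K ε, isOpen_ball, hKopen⟩
  exact hne n hn hu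

end UniformlyDiscrete

theorem ThreePt.eq_or_eq_or_eq (x : ThreePt) : x = q0 ∨ x = q1 ∨ x = q2 := by
  obtain ⟨v, hv | hv | hv⟩ := x
  exacts [Or.inl (Subtype.ext hv), Or.inr (Or.inl (Subtype.ext hv)),
    Or.inr (Or.inr (Subtype.ext hv))]

theorem ThreePt.eq_of_dist_lt_one (x y : ThreePt) (h : dist x y < 1) : x = y := by
  rcases x.eq_or_eq_or_eq with rfl | rfl | rfl <;>
    rcases y.eq_or_eq_or_eq with rfl | rfl | rfl <;>
    first | rfl | norm_num [q0, q1, q2, Subtype.dist_eq, Real.dist_eq] at h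

theorem q1_ne_q0 : q1 ≠ q0 := by simp [q0, q1]
theorem q1_ne_q2 : q1 ≠ q2 := by simp [q1, q2]

/-- on `X = {0, 1, 2}`, with `f₁` the cycle `0 ↦ 1 ↦ 2 ↦ 0` and `f₂` the
inverse cycle `0 ↦ 2 ↦ 1 ↦ 0`, both `f₁` and `f₂` are topologically transitive, but the
multiple mapping `F = {f₁, f₂}` is not transitive: indeed there is no `n ≥ 1` with
`F^n(0) = {0, 2}`, witnessing failure for `U = {0}` and `𝒰 = {{0,2}}`. -/
theorem stmt13 (f₁ f₂ : ThreePt → ThreePt)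
    (h1a : f₁ q0 = q1) (h1b : f₁ q1 = q2) (h1c : f₁ q2 = q0)
    (h2a : f₂ q0 = q2) (h2b : f₂ q2 = q1) (h2c : f₂ q1 = q0) :
    MapTransitive f₁ ∧ MapTransitive f₂ ∧
    ¬ MTransitive f₁ f₂ ∧
    ∀ n, 1 ≤ n → mIter f₁ f₂ n q0 ≠ ({q0, q2} : Set ThreePt) := by
  have hq1 : ∀ n, 1 ≤ n → q1 ∈ mIter f₁ f₂ n q0 := by
    refine fun n hn => subset_mIter_of_le (S := {q1, q2}) ?_ ?_ n hn (by simp)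
    · simp [Set.insert_subset_iff, h1b, h2b]
    · rw [mIter_one, h1a, h2a]
  have hne : ∀ n, 1 ≤ n → mIter f₁ f₂ n q0 ≠ ({q0, q2} : Set ThreePt) := by
    intro n hn heq
    have := heq ▸ hq1 n hn
    simp [q1_ne_q0, q1_ne_q2] at this
  have hF1q1 : mIter f₁ f₂ 1 q1 = {q0, q2} := by rw [mIter_one, h1b, h2c, Set.pair_comm]
  refine ⟨mapTransitive_of_threeCycle h1a h1b h1c ThreePt.eq_or_eq_or_eq,
    mapTransitive_of_threeCycle h2a h2b h2c fun x => ?_,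
    not_mTransitive_of_forall_ne one_pos ThreePt.eq_of_dist_lt_one q0 ⟨1, le_rfl, q1, rfl⟩
      fun n hn h => hne n hn ((congrArg SetLike.coe h).trans hF1q1), hne⟩
  rcases x.eq_or_eq_or_eq with h | h | h <;> simp [h]
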